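/- arXiv:1710.07867 — 13 statements merged into one kernel-verified Lean document; each statement's English description precedes it below -/
import Mathlib

section
/- Let k ≥ 1 and let x*, y* ≥ 0 be real numbers, and for y ≥ 0 set x̃(y) = (k x* + y* − (k + 1)y)/(2k). Then for every y with 0 ≤ y ≤ (k x* + y*)/(k + 1) one has (k(x* − x̃(y)) + (y* − y))(x̃(y) + y) = (k x* + y* + (k − 1)y)²/(4k), the maximum of this expression over y ∈ [0, (k x* + y*)/(k + 1)] equals k(k x* + y*)²/(k + 1)², and this maximum is at most (k x* + y*)²/4. -/
/-- Case 1 computation: with `x̃(y) = (k x* + y* − (k+1)y)/(2k)`, for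
`0 ≤ y ≤ (k x* + y*)/(k+1)` the value `δ(x̃(y), y)` equals
`(k x* + y* + (k−1)y)² / (4k)`; the maximum over this range of `y` equals
`k (k x* + y*)² / (k+1)²`, which is at most `(k x* + y*)² / 4`. -/
theorem case1_computation (k xs ys : ℝ) (hk : 1 ≤ k) (hxs : 0 ≤ xs) (hys : 0 ≤ ys) :
    (∀ y : ℝ, 0 ≤ y → y ≤ (k * xs + ys) / (k + 1) →
      (k * (xs - (k * xs + ys - (k + 1) * y) / (2 * k)) + (ys - y)) *
          ((k * xs + ys - (k + 1) * y) / (2 * k) + y)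
        = (k * xs + ys + (k - 1) * y) ^ 2 / (4 * k)) ∧
    IsGreatest {d : ℝ | ∃ y : ℝ, 0 ≤ y ∧ y ≤ (k * xs + ys) / (k + 1) ∧
        d = (k * (xs - (k * xs + ys - (k + 1) * y) / (2 * k)) + (ys - y)) *
          ((k * xs + ys - (k + 1) * y) / (2 * k) + y)}
      (k * (k * xs + ys) ^ 2 / (k + 1) ^ 2) ∧
    k * (k * xs + ys) ^ 2 / (k + 1) ^ 2 ≤ (k * xs + ys) ^ 2 / 4 := by
  have hk0 : (0:ℝ) < k := lt_of_lt_of_le one_pos hk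
  have hk1 : (0:ℝ) < k + 1 := by linarith
  have hS : 0 ≤ k * xs + ys := by positivity
  have hid : ∀ y : ℝ,
      (k * (xs - (k * xs + ys - (k + 1) * y) / (2 * k)) + (ys - y)) *
          ((k * xs + ys - (k + 1) * y) / (2 * k) + y)
        = (k * xs + ys + (k - 1) * y) ^ 2 / (4 * k) := by
    intro y
    field_simp
    ring
  refine ⟨fun y _ _ => hid y, ⟨⟨(k * xs + ys) / (k + 1), le_div_iff₀ hk1 |>.2 (by linarith),
      le_refl _, ?_⟩, ?_⟩, ?_⟩
  · rw [hid]
    rw [div_eq_div_iff (by positivity) (by positivity)]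
    field_simp
    ring
  · rintro d ⟨y, hy0, hy1, rfl⟩
    rw [hid]
    rw [div_le_div_iff₀ (by positivity) (by positivity)]
    have hyb : (k + 1) * y ≤ k * xs + ys := by
      have := (le_div_iff₀ hk1).1 hy1; linarith
    have h1 : 0 ≤ k * xs + ys + (k - 1) * y := by nlinarith
    have h2 : (k + 1) * (k * xs + ys + (k - 1) * y) ≤ 2 * k * (k * xs + ys) := by
      nlinarith [mul_nonneg (sub_nonneg.2 hk) (sub_nonneg.2 hyb)]
    nlinarith [mul_le_mul h2 h2 (by positivity) (by positivity)]
  · rw [div_le_div_iff₀ (by positivity) (by norm_num)]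
    nlinarith [sq_nonneg (k - 1), sq_nonneg (k * xs + ys)]
end

section
/- Let n ∈ ℕ, let k ≥ 1, and let A ∈ ℝ^{2n×2n} be block diagonal with 2×2 blocks A_i, where each A_i is either of the form [[k_i a_i, a_i], [k_i a_i, a_i]] or of the form [[a_i, k_i a_i], [a_i, k_i a_i]] for some a_i ≥ 0 and some k_i with 1 ≤ k_i ≤ k. Then for all vectors v, z ∈ ℝ^{2n} with nonnegative entries, ⟨A(v − z), z⟩ ≤ (k/4)⟨A v, v⟩. -/
open Matrix

lemma key_ineq (k κ a v0 v1 z0 z1 : ℝ) (hk : 1 ≤ k) (hκ1 : 1 ≤ κ) (hκk : κ ≤ k)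
    (ha : 0 ≤ a) (hv0 : 0 ≤ v0) (hv1 : 0 ≤ v1) (hz0 : 0 ≤ z0) (hz1 : 0 ≤ z1) :
    (κ*a*(v0-z0)+a*(v1-z1))*(z0+z1) ≤ k/4 * ((κ*a*v0+a*v1)*(v0+v1)) := by
  nlinarith [sq_nonneg (κ*v0 + v1 - 2*(z0+z1)),
    mul_nonneg (mul_nonneg ha (sub_nonneg.2 hκ1)) (mul_nonneg hz0 (add_nonneg hz0 hz1)),
    mul_nonneg (mul_nonneg ha (add_nonneg (mul_nonneg (le_trans zero_le_one hκ1) hv0) hv1))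
      (sub_nonneg.2 (by nlinarith : κ*v0 + v1 ≤ k*(v0+v1))),
    mul_nonneg ha (sq_nonneg (κ*v0 + v1 - 2*(z0+z1)))]

lemma block_sum (n : ℕ) (B : Fin n → Matrix (Fin 2) (Fin 2) ℝ)
    (u z : Fin 2 × Fin n → ℝ) :
    (Matrix.blockDiagonal B *ᵥ u) ⬝ᵥ z = ∑ i : Fin n,
      ((B i 0 0 * u (0,i) + B i 0 1 * u (1,i)) * z (0,i)
      + (B i 1 0 * u (0,i) + B i 1 1 * u (1,i)) * z (1,i)) := by
  simp only [dotProduct, mulVec, Fintype.sum_prod_type_right, Fin.sum_univ_two,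
    blockDiagonal_apply]
  simp [Finset.sum_ite_eq', Finset.sum_add_distrib, mul_comm]

/-- Core estimate `β(C_k) ≤ k/4`: for a block-diagonal matrix `A` with 2×2 blocks
`[[kᵢaᵢ, aᵢ], [kᵢaᵢ, aᵢ]]` or `[[aᵢ, kᵢaᵢ], [aᵢ, kᵢaᵢ]]` with `aᵢ ≥ 0` and
`1 ≤ kᵢ ≤ k`, and all nonnegative vectors `v, z`, one has
`⟨A(v − z), z⟩ ≤ (k/4)⟨A v, v⟩`. -/
theorem beta_bound (n : ℕ) (k : ℝ) (hk : 1 ≤ k)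
    (a ki : Fin n → ℝ) (ha : ∀ i, 0 ≤ a i)
    (hki : ∀ i, 1 ≤ ki i ∧ ki i ≤ k)
    (B : Fin n → Matrix (Fin 2) (Fin 2) ℝ)
    (hB : ∀ i, B i = !![ki i * a i, a i; ki i * a i, a i] ∨
               B i = !![a i, ki i * a i; a i, ki i * a i])
    (A : Matrix (Fin 2 × Fin n) (Fin 2 × Fin n) ℝ)
    (hA : A = Matrix.blockDiagonal B)
    (v z : Fin 2 × Fin n → ℝ) (hv : ∀ j, 0 ≤ v j) (hz : ∀ j, 0 ≤ z j) :
    (A *ᵥ (v - z)) ⬝ᵥ z ≤ (k / 4) * ((A *ᵥ v) ⬝ᵥ v) := by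
  subst hA
  rw [block_sum, block_sum, Finset.mul_sum]
  apply Finset.sum_le_sum
  intro i _
  obtain ⟨hκ1, hκk⟩ := hki i
  have h := fun v0 v1 z0 z1 h1 h2 h3 h4 =>
    key_ineq k (ki i) (a i) v0 v1 z0 z1 hk hκ1 hκk (ha i) h1 h2 h3 h4
  rcases hB i with h1 | h1 <;>
    simp only [h1, Matrix.of_apply, Matrix.cons_val', Matrix.cons_val_zero, Matrix.cons_val_one,
      Matrix.head_cons, Matrix.empty_val', Matrix.cons_val_fin_one, Matrix.head_fin_const,
      Pi.sub_apply]
  · nlinarith [h (v (0,i)) (v (1,i)) (z (0,i)) (z (1,i)) (hv _) (hv _) (hz _) (hz _)]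
  · nlinarith [h (v (1,i)) (v (0,i)) (z (1,i)) (z (0,i)) (hv _) (hv _) (hz _) (hz _)]
end

section
/- Let k ≥ 1 and consider the 2×2 matrix A = [[k, 1], [k, 1]] and the vector v = (1, 0). Then with z = (0, k/2) one has ⟨A(v − z), z⟩ = (k/4)⟨A v, v⟩; hence the constant k/4 in the inequality ⟨A(v − z), z⟩ ≤ (k/4)⟨A v, v⟩ for pairwise separable costs of asymmetry k cannot be improved. -/
open Matrix

/-- Tightness of the `k/4` bound: for `A = [[k,1],[k,1]]`, `v = (1,0)` and
`z = (0, k/2)` one has `⟨A(v − z), z⟩ = (k/4)⟨A v, v⟩`; hence no constant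
smaller than `k/4` works in the inequality `⟨A(v − z), z⟩ ≤ β ⟨A v, v⟩` for all
nonnegative deviations `z`. -/
theorem beta_bound_tight (k : ℝ) (hk : 1 ≤ k)
    (A : Matrix (Fin 2) (Fin 2) ℝ) (hA : A = !![k, 1; k, 1])
    (v z : Fin 2 → ℝ) (hv : v = ![1, 0]) (hz : z = ![0, k / 2]) :
    (A *ᵥ (v - z)) ⬝ᵥ z = (k / 4) * ((A *ᵥ v) ⬝ᵥ v) ∧
    ∀ β : ℝ, (∀ z' : Fin 2 → ℝ, (∀ j, 0 ≤ z' j) →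
        (A *ᵥ (v - z')) ⬝ᵥ z' ≤ β * ((A *ᵥ v) ⬝ᵥ v)) → k / 4 ≤ β := by
  have hk0 : (0 : ℝ) < k := lt_of_lt_of_le one_pos hk
  subst hA hv hz
  have heq : ((!![k, 1; k, 1] : Matrix (Fin 2) (Fin 2) ℝ) *ᵥ
      (![1, 0] - ![0, k / 2])) ⬝ᵥ ![0, k / 2]
      = (k / 4) * ((!![k, 1; k, 1] *ᵥ ![1, 0]) ⬝ᵥ ![1, 0]) := by
    simp [mulVec, dotProduct, Fin.sum_univ_two]
    ring
  refine ⟨heq, fun β hβ => ?_⟩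
  have h := hβ ![0, k / 2] (by
    intro j
    fin_cases j
    · simp
    · simp; positivity)
  rw [heq] at h
  have hvv : ((!![k, 1; k, 1] : Matrix (Fin 2) (Fin 2) ℝ) *ᵥ ![1, 0]) ⬝ᵥ ![1, 0] = k := by
    simp [mulVec, dotProduct, Fin.sum_univ_two]
  rw [hvv] at h
  exact le_of_mul_le_mul_right (by linarith [mul_comm (k/4) k, mul_comm β k]) hk0
end

section
/- Let m ∈ ℕ, let X be a set of vectors in ℝ^m with nonnegative entries, let c : ℝ^m → ℝ^m, and let z^EQ ∈ X satisfy the variational inequality ⟨c(z^EQ), z^EQ − z⟩ ≤ 0 for all z ∈ X. Suppose ⟨c(z^EQ), z^EQ⟩ ≥ 0 and there is a constant β with 0 ≤ β < 1 such that ⟨c(z^EQ) − c(z), z⟩ ≤ β ⟨c(z^EQ), z^EQ⟩ for all z ∈ ℝ^m with nonnegative entries. Then for every z ∈ X, ⟨c(z^EQ), z^EQ⟩ ≤ (1 − β)^{-1} ⟨c(z), z⟩. -/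
open Matrix

/-- Theorem 1(a): if the Wardrop equilibrium `z^EQ` satisfies the variational
inequality, `⟨c(z^EQ), z^EQ⟩ ≥ 0`, and `⟨c(z^EQ) − c(z), z⟩ ≤ β ⟨c(z^EQ), z^EQ⟩`
for all nonnegative `z` with `0 ≤ β < 1`, then the price of anarchy is at most
`(1 − β)⁻¹`. -/
theorem poa_bound (m : ℕ) (X : Set (Fin m → ℝ)) (hX : ∀ z ∈ X, ∀ i, 0 ≤ z i)
    (c : (Fin m → ℝ) → (Fin m → ℝ))
    (zeq : Fin m → ℝ) (hzeq : zeq ∈ X)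
    (hVI : ∀ z ∈ X, (c zeq) ⬝ᵥ (zeq - z) ≤ 0)
    (hnn : 0 ≤ (c zeq) ⬝ᵥ zeq)
    (β : ℝ) (hβ0 : 0 ≤ β) (hβ1 : β < 1)
    (hβ : ∀ z : Fin m → ℝ, (∀ i, 0 ≤ z i) →
      (c zeq - c z) ⬝ᵥ z ≤ β * ((c zeq) ⬝ᵥ zeq)) :
    ∀ z ∈ X, (c zeq) ⬝ᵥ zeq ≤ (1 - β)⁻¹ * ((c z) ⬝ᵥ z) := by
  intro z hz
  have h1 : (c zeq) ⬝ᵥ zeq ≤ (c zeq) ⬝ᵥ z := by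
    have := hVI z hz
    rw [dotProduct_sub] at this; linarith
  have h2 : (c zeq) ⬝ᵥ z - (c z) ⬝ᵥ z ≤ β * ((c zeq) ⬝ᵥ zeq) := by
    have := hβ z (hX z hz)
    rwa [sub_dotProduct] at this
  rw [le_inv_mul_iff₀ (by linarith : (0:ℝ) < 1 - β)]
  nlinarith
end

section
/- Let m ∈ ℕ, let X be a set of vectors in ℝ^m with nonnegative entries, let c : ℝ^m → ℝ^m, and let z^EQ ∈ X satisfy the variational inequality ⟨c(z^EQ), z^EQ − z⟩ ≤ 0 for all z ∈ X. Suppose there is a constant β ≥ 0 such that ⟨c(z^EQ) − c(z), z⟩ ≤ β ⟨c(z^EQ), z^EQ⟩ for all z ∈ ℝ^m with nonnegative entries. If w ∈ ℝ^m has nonnegative entries and (1 + β)^{-1} w ∈ X, then ⟨c(z^EQ), z^EQ⟩ ≤ ⟨c(w), w⟩. -/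
open Matrix

/-- Theorem 1(b) (bicriteria): if the Wardrop equilibrium `z^EQ` satisfies the
variational inequality and `⟨c(z^EQ) − c(z), z⟩ ≤ β ⟨c(z^EQ), z^EQ⟩` for all
nonnegative `z`, then for any nonnegative `w` with `(1 + β)⁻¹ w` feasible,
`⟨c(z^EQ), z^EQ⟩ ≤ ⟨c(w), w⟩`. -/
theorem bicriteria_bound (m : ℕ) (X : Set (Fin m → ℝ)) (hX : ∀ z ∈ X, ∀ i, 0 ≤ z i)
    (c : (Fin m → ℝ) → (Fin m → ℝ))
    (zeq : Fin m → ℝ) (hzeq : zeq ∈ X)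
    (hVI : ∀ z ∈ X, (c zeq) ⬝ᵥ (zeq - z) ≤ 0)
    (β : ℝ) (hβ0 : 0 ≤ β)
    (hβ : ∀ z : Fin m → ℝ, (∀ i, 0 ≤ z i) →
      (c zeq - c z) ⬝ᵥ z ≤ β * ((c zeq) ⬝ᵥ zeq))
    (w : Fin m → ℝ) (hw : ∀ i, 0 ≤ w i) (hwX : (1 + β)⁻¹ • w ∈ X) :
    (c zeq) ⬝ᵥ zeq ≤ (c w) ⬝ᵥ w := by
  have hpos : (0:ℝ) < 1 + β := by linarith
  have h1 := hVI _ hwX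
  have h2 := hβ w hw
  rw [dotProduct_sub, sub_nonpos, dotProduct_smul] at h1
  rw [sub_dotProduct] at h2
  -- h1 : c zeq ⬝ᵥ zeq ≤ (1+β)⁻¹ • (c zeq ⬝ᵥ w)
  have h3 : (1 + β) * ((c zeq) ⬝ᵥ zeq) ≤ (c zeq) ⬝ᵥ w := by
    have := mul_le_mul_of_nonneg_left h1 hpos.le
    simpa [smul_eq_mul, mul_inv_cancel_left₀ hpos.ne'] using this
  nlinarith [h2, h3]
end

section
/- Let n ∈ ℕ and 1 ≤ k < 4. Let c(z) = A z + b where A ∈ ℝ^{2n×2n} is block diagonal with 2×2 blocks of the form [[k_i a_i, a_i], [k_i a_i, a_i]] or [[a_i, k_i a_i], [a_i, k_i a_i]] with a_i ≥ 0 and 1 ≤ k_i ≤ k, and b ∈ ℝ^{2n} has nonnegative entries. Let X be a set of vectors in ℝ^{2n} with nonnegative entries and let z^EQ ∈ X satisfy ⟨c(z^EQ), z^EQ − z⟩ ≤ 0 for all z ∈ X. Then for every z ∈ X, ⟨c(z^EQ), z^EQ⟩ ≤ (4/(4 − k)) ⟨c(z), z⟩. -/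
open Matrix

lemma key_block (k a x y u v : ℝ) (ha : 0 ≤ a) (hk : 1 ≤ k)
    (hx : 0 ≤ x) (hy : 0 ≤ y) (hu : 0 ≤ u) (hv : 0 ≤ v) :
    a*(k*x+y)*(u+v) ≤ a*(k*u+v)*(u+v) + k/4 * (a*(k*x+y)*(x+y)) := by
  nlinarith [mul_nonneg ha (sq_nonneg (k*x+y-2*(u+v))),
    mul_nonneg (mul_nonneg ha (by nlinarith : (0:ℝ) ≤ (k-1)*y)) (by nlinarith : (0:ℝ) ≤ k*x+y),
    mul_nonneg (mul_nonneg ha (by nlinarith : (0:ℝ) ≤ (k-1)*u)) (by linarith : 0 ≤ u+v)]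

lemma blockDot (n : ℕ) (B : Fin n → Matrix (Fin 2) (Fin 2) ℝ) (x y : Fin 2 × Fin n → ℝ) :
    (blockDiagonal B *ᵥ x) ⬝ᵥ y
      = ∑ i, ((B i *ᵥ fun j => x (j,i)) ⬝ᵥ fun j => y (j,i)) := by
  simp only [dotProduct, mulVec, Fintype.sum_prod_type, blockDiagonal_apply]
  rw [Finset.sum_comm]
  refine Finset.sum_congr rfl fun i _ => Finset.sum_congr rfl fun j _ => ?_
  congr 1
  rw [Finset.sum_comm]
  simp [ite_mul, Finset.sum_ite_eq, eq_comm]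

/-- Theorem 2(a): for pairwise separable affine costs `c(z) = A z + b` with
maximum degree of asymmetry `1 ≤ k < 4` and nonnegative `b`, the social cost of
a Wardrop equilibrium is at most `4/(4 − k)` times that of any feasible flow. -/
theorem poa_pairwise_separable (n : ℕ) (k : ℝ) (hk1 : 1 ≤ k) (hk4 : k < 4)
    (a ki : Fin n → ℝ) (ha : ∀ i, 0 ≤ a i)
    (hki : ∀ i, 1 ≤ ki i ∧ ki i ≤ k)
    (B : Fin n → Matrix (Fin 2) (Fin 2) ℝ)
    (hB : ∀ i, B i = !![ki i * a i, a i; ki i * a i, a i] ∨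
               B i = !![a i, ki i * a i; a i, ki i * a i])
    (A : Matrix (Fin 2 × Fin n) (Fin 2 × Fin n) ℝ)
    (hA : A = Matrix.blockDiagonal B)
    (b : Fin 2 × Fin n → ℝ) (hb : ∀ j, 0 ≤ b j)
    (c : (Fin 2 × Fin n → ℝ) → (Fin 2 × Fin n → ℝ))
    (hc : ∀ z, c z = A *ᵥ z + b)
    (X : Set (Fin 2 × Fin n → ℝ)) (hX : ∀ z ∈ X, ∀ j, 0 ≤ z j)
    (zeq : Fin 2 × Fin n → ℝ) (hzeq : zeq ∈ X)
    (hVI : ∀ z ∈ X, (c zeq) ⬝ᵥ (zeq - z) ≤ 0) :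
    ∀ z ∈ X, (c zeq) ⬝ᵥ zeq ≤ (4 / (4 - k)) * ((c z) ⬝ᵥ z) := by
  intro z hz
  have h4k : (0:ℝ) < 4 - k := by linarith
  have hbzeq : 0 ≤ b ⬝ᵥ zeq :=
    Finset.sum_nonneg fun p _ => mul_nonneg (hb p) (hX zeq hzeq p)
  have hVIz := hVI z hz
  rw [dotProduct_sub] at hVIz
  have hstep3 : (A *ᵥ zeq) ⬝ᵥ z ≤ (A *ᵥ z) ⬝ᵥ z + k/4 * ((A *ᵥ zeq) ⬝ᵥ zeq) := by
    rw [hA, blockDot, blockDot, blockDot, Finset.mul_sum, ← Finset.sum_add_distrib]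
    refine Finset.sum_le_sum fun i _ => ?_
    obtain ⟨hki1, hkik⟩ := hki i
    have h0 := hX zeq hzeq (0,i); have h1 := hX zeq hzeq (1,i)
    have h2 := hX z hz (0,i); have h3 := hX z hz (1,i)
    have key := key_block (ki i) (a i) (zeq (0,i)) (zeq (1,i)) (z (0,i)) (z (1,i))
      (ha i) hki1 h0 h1 h2 h3
    have key2 := key_block (ki i) (a i) (zeq (1,i)) (zeq (0,i)) (z (1,i)) (z (0,i))
      (ha i) hki1 h1 h0 h3 h2
    have hfac : (0:ℝ) ≤ a i * (ki i * zeq (0,i) + zeq (1,i)) * (zeq (0,i) + zeq (1,i)) :=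
      mul_nonneg (mul_nonneg (ha i) (by nlinarith)) (by linarith)
    have hfac2 : (0:ℝ) ≤ a i * (ki i * zeq (1,i) + zeq (0,i)) * (zeq (1,i) + zeq (0,i)) :=
      mul_nonneg (mul_nonneg (ha i) (by nlinarith)) (by linarith)
    have hkk : 0 ≤ k - ki i := by linarith
    rcases hB i with h | h <;> rw [h] <;>
      simp only [mulVec, dotProduct, Fin.sum_univ_two, Matrix.cons_val', Matrix.cons_val_zero,
        Matrix.cons_val_one, Matrix.head_cons, Matrix.empty_val', Matrix.cons_val_fin_one,
        Matrix.head_fin_const, Matrix.of_apply]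
    · nlinarith [mul_nonneg hkk hfac]
    · nlinarith [mul_nonneg hkk hfac2]
  have e1 : c zeq ⬝ᵥ zeq = (A *ᵥ zeq) ⬝ᵥ zeq + b ⬝ᵥ zeq := by rw [hc, add_dotProduct]
  have e2 : c zeq ⬝ᵥ z = (A *ᵥ zeq) ⬝ᵥ z + b ⬝ᵥ z := by rw [hc, add_dotProduct]
  have e3 : c z ⬝ᵥ z = (A *ᵥ z) ⬝ᵥ z + b ⬝ᵥ z := by rw [hc, add_dotProduct]
  rw [div_mul_eq_mul_div, le_div_iff₀ h4k]
  nlinarith [mul_nonneg (by linarith : (0:ℝ) ≤ k) hbzeq]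
end

section
/- Let n ∈ ℕ and k ≥ 1. Let c(z) = A z + b where A ∈ ℝ^{2n×2n} is block diagonal with 2×2 blocks of the form [[k_i a_i, a_i], [k_i a_i, a_i]] or [[a_i, k_i a_i], [a_i, k_i a_i]] with a_i ≥ 0 and 1 ≤ k_i ≤ k, and b ∈ ℝ^{2n} has nonnegative entries. Let X be a set of vectors in ℝ^{2n} with nonnegative entries, let z^EQ ∈ X satisfy ⟨c(z^EQ), z^EQ − z⟩ ≤ 0 for all z ∈ X, and let w ∈ ℝ^{2n} have nonnegative entries with (1 + k/4)^{-1} w ∈ X. Then ⟨c(z^EQ), z^EQ⟩ ≤ ⟨c(w), w⟩. -/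
/-!
Each block has two equal rows `(α, β)` with `a ≤ α, β ≤ k a`, so on road `i` the cost vector is
`ℓ(z) (1, 1)` for a linear form `ℓ` with `a (x + y) ≤ ℓ(x, y) ≤ k a (x + y)` on nonnegative flows.
Completing the square, `(ℓ(u) - ℓ(w)) (w₁ + w₂) ≤ ℓ(u)² / (4a) ≤ (k/4) ℓ(u) (u₁ + u₂)`, and summing
over roads (the nonnegative `b` only helps) gives the smoothness inequality
`⟨c(u), w⟩ ≤ ⟨c(w), w⟩ + (k/4) ⟨c(u), u⟩`. Testing the variational inequality against
`(1 + k/4)⁻¹ w` yields `(1 + k/4) C(z^EQ) ≤ ⟨c(z^EQ), w⟩ ≤ C(w) + (k/4) C(z^EQ)`.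
-/

open Matrix Finset

theorem sub_mul_le_of_bounds {m k U V S T : ℝ} (hm : 0 ≤ m) (hT : 0 ≤ T) (hV : m * T ≤ V)
    (hU : 0 ≤ U) (hUS : U ≤ k * m * S) : (U - V) * T ≤ k / 4 * (U * S) := by
  rcases hm.eq_or_lt with rfl | hm
  · obtain rfl : U = 0 := by linarith
    nlinarith
  · refine le_of_mul_le_mul_left ?_ (by positivity : 0 < 4 * m)
    nlinarith [sq_nonneg (2 * m * T - U), mul_nonneg (mul_nonneg hm.le hT) (sub_nonneg.2 hV),
      mul_le_mul_of_nonneg_left hUS hU]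

/-- Roughgarden's `(1, μ)`-smoothness of a cost map, on the nonnegative orthant. -/
def IsSmoothCost {ι : Type*} [Fintype ι] (c : (ι → ℝ) → ι → ℝ) (μ : ℝ) : Prop :=
  ∀ u w : ι → ℝ, 0 ≤ u → 0 ≤ w → c u ⬝ᵥ w ≤ c w ⬝ᵥ w + μ * (c u ⬝ᵥ u)

section EqualRows

variable {ι : Type*} [Fintype ι]

theorem mulVec_dotProduct_of_forall_row_eq {B : Matrix ι ι ℝ} {r : ι → ℝ} (hB : ∀ p, B p = r)
    (u w : ι → ℝ) : (B *ᵥ u) ⬝ᵥ w = (r ⬝ᵥ u) * ∑ p, w p := by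
  simp only [dotProduct, mulVec, hB, mul_sum]

theorem mul_sum_le_dotProduct {r w : ι → ℝ} {m : ℝ} (hr : ∀ q, m ≤ r q) (hw : 0 ≤ w) :
    m * ∑ q, w q ≤ r ⬝ᵥ w := by
  simpa [dotProduct, mul_sum] using
    dotProduct_le_dotProduct_of_nonneg_right (u := fun _ => m) hr hw

theorem dotProduct_le_mul_sum {r w : ι → ℝ} {M : ℝ} (hr : ∀ q, r q ≤ M) (hw : 0 ≤ w) :
    r ⬝ᵥ w ≤ M * ∑ q, w q := by
  simpa [dotProduct, mul_sum] using
    dotProduct_le_dotProduct_of_nonneg_right (v := fun _ => M) hr hw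

theorem isSmoothCost_mulVec_of_forall_row_eq {B : Matrix ι ι ℝ} {r : ι → ℝ} {m k : ℝ}
    (hB : ∀ p, B p = r) (hm : 0 ≤ m) (hr : ∀ q, m ≤ r q ∧ r q ≤ k * m) :
    IsSmoothCost (B *ᵥ ·) (k / 4) := by
  intro u w hu hw
  simp only [mulVec_dotProduct_of_forall_row_eq hB]
  have hru : 0 ≤ r ⬝ᵥ u := dotProduct_nonneg_of_nonneg (fun q => hm.trans (hr q).1) hu
  have := sub_mul_le_of_bounds hm (sum_nonneg fun q _ => hw q)
    (mul_sum_le_dotProduct (fun q => (hr q).1) hw) hru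
    (by simpa [mul_assoc] using dotProduct_le_mul_sum (fun q => (hr q).2) hu)
  linarith

end EqualRows

namespace IsSmoothCost

variable {ι : Type*} [Fintype ι] {c : (ι → ℝ) → ι → ℝ} {μ : ℝ}

theorem add_const (hc : IsSmoothCost c μ) (hμ : 0 ≤ μ) {b : ι → ℝ} (hb : 0 ≤ b) :
    IsSmoothCost (fun z => c z + b) μ := by
  intro u w hu hw
  simp only [add_dotProduct]
  nlinarith [hc u w hu hw, mul_nonneg hμ (dotProduct_nonneg_of_nonneg hb hu)]

theorem dotProduct_self_le_of_variational_ineq (hc : IsSmoothCost c μ) (hμ : 0 < 1 + μ)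
    {u w : ι → ℝ} (hu : 0 ≤ u) (hw : 0 ≤ w) (hVI : c u ⬝ᵥ (u - (1 + μ)⁻¹ • w) ≤ 0) :
    c u ⬝ᵥ u ≤ c w ⬝ᵥ w := by
  rw [dotProduct_sub, dotProduct_smul, smul_eq_mul] at hVI
  have hscaled : (1 + μ) * (c u ⬝ᵥ u) ≤ c u ⬝ᵥ w :=
    calc (1 + μ) * (c u ⬝ᵥ u) ≤ (1 + μ) * ((1 + μ)⁻¹ * (c u ⬝ᵥ w)) := by gcongr; linarith
      _ = c u ⬝ᵥ w := mul_inv_cancel_left₀ hμ.ne' _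
  linarith [hc u w hu hw]

end IsSmoothCost

theorem blockDiagonal_mulVec_apply {m o α : Type*} [Fintype m] [Fintype o] [DecidableEq o]
    [NonUnitalNonAssocSemiring α] (B : o → Matrix m m α) (u : m × o → α) (p : m) (i : o) :
    (blockDiagonal B *ᵥ u) (p, i) = (B i *ᵥ fun q => u (q, i)) p := by
  simp [mulVec, dotProduct, Fintype.sum_prod_type_right, blockDiagonal_apply']

theorem blockDiagonal_mulVec_dotProduct {m o α : Type*} [Fintype m] [Fintype o] [DecidableEq o]
    [NonUnitalNonAssocSemiring α] (B : o → Matrix m m α) (u w : m × o → α) :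
    (blockDiagonal B *ᵥ u) ⬝ᵥ w = ∑ i, (B i *ᵥ fun p => u (p, i)) ⬝ᵥ fun p => w (p, i) := by
  simp only [dotProduct, Fintype.sum_prod_type_right, blockDiagonal_mulVec_apply]

theorem isSmoothCost_blockDiagonal {m o : Type*} [Fintype m] [Fintype o] [DecidableEq o]
    {B : o → Matrix m m ℝ} {μ : ℝ} (hB : ∀ i, IsSmoothCost (B i *ᵥ ·) μ) :
    IsSmoothCost (blockDiagonal B *ᵥ ·) μ := by
  intro u w hu hw
  simp only [blockDiagonal_mulVec_dotProduct, mul_sum, ← sum_add_distrib]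
  exact sum_le_sum fun i _ => hB i _ _ (fun p => hu (p, i)) fun p => hw (p, i)

theorem isSmoothCost_mulVec_of_pairwise_block {B : Matrix (Fin 2) (Fin 2) ℝ} {a κ k : ℝ}
    (ha : 0 ≤ a) (hκ : 1 ≤ κ ∧ κ ≤ k)
    (hB : B = !![κ * a, a; κ * a, a] ∨ B = !![a, κ * a; a, κ * a]) :
    IsSmoothCost (B *ᵥ ·) (k / 4) := by
  have hκa : a ≤ κ * a := le_mul_of_one_le_left ha hκ.1
  have hka : κ * a ≤ k * a := mul_le_mul_of_nonneg_right hκ.2 ha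
  rcases hB with rfl | rfl
  · exact isSmoothCost_mulVec_of_forall_row_eq (r := ![κ * a, a])
      (Fin.forall_fin_two.2 ⟨rfl, rfl⟩) ha
      (Fin.forall_fin_two.2 ⟨⟨hκa, hka⟩, ⟨le_rfl, hκa.trans hka⟩⟩)
  · exact isSmoothCost_mulVec_of_forall_row_eq (r := ![a, κ * a])
      (Fin.forall_fin_two.2 ⟨rfl, rfl⟩) ha
      (Fin.forall_fin_two.2 ⟨⟨le_rfl, hκa.trans hka⟩, ⟨hκa, hka⟩⟩)

/-- Theorem 2(b) (bicriteria): for pairwise separable affine costs `c(z) = A z + b`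
with maximum degree of asymmetry `k ≥ 1` and nonnegative `b`, the social cost of a
Wardrop equilibrium is at most that of any nonnegative `w` whose down-scaling
`(1 + k/4)⁻¹ w` is feasible. -/
theorem bicriteria_pairwise_separable (n : ℕ) (k : ℝ) (hk : 1 ≤ k)
    (a ki : Fin n → ℝ) (ha : ∀ i, 0 ≤ a i)
    (hki : ∀ i, 1 ≤ ki i ∧ ki i ≤ k)
    (B : Fin n → Matrix (Fin 2) (Fin 2) ℝ)
    (hB : ∀ i, B i = !![ki i * a i, a i; ki i * a i, a i] ∨
               B i = !![a i, ki i * a i; a i, ki i * a i])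
    (A : Matrix (Fin 2 × Fin n) (Fin 2 × Fin n) ℝ)
    (hA : A = Matrix.blockDiagonal B)
    (b : Fin 2 × Fin n → ℝ) (hb : ∀ j, 0 ≤ b j)
    (c : (Fin 2 × Fin n → ℝ) → (Fin 2 × Fin n → ℝ))
    (hc : ∀ z, c z = A *ᵥ z + b)
    (X : Set (Fin 2 × Fin n → ℝ)) (hX : ∀ z ∈ X, ∀ j, 0 ≤ z j)
    (zeq : Fin 2 × Fin n → ℝ) (hzeq : zeq ∈ X)
    (hVI : ∀ z ∈ X, (c zeq) ⬝ᵥ (zeq - z) ≤ 0)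
    (w : Fin 2 × Fin n → ℝ) (hw : ∀ j, 0 ≤ w j)
    (hwX : (1 + k / 4)⁻¹ • w ∈ X) :
    (c zeq) ⬝ᵥ zeq ≤ (c w) ⬝ᵥ w := by
  have hsmooth : IsSmoothCost c (k / 4) := by
    rw [show c = fun z => A *ᵥ z + b from funext hc, hA]
    exact (isSmoothCost_blockDiagonal fun i =>
      isSmoothCost_mulVec_of_pairwise_block (ha i) (hki i) (hB i)).add_const (by positivity) hb
  exact hsmooth.dotProduct_self_le_of_variational_ineq (by positivity) (hX zeq hzeq) hw
    (hVI _ hwX)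
end

section
/- Let m ∈ ℕ and let c : ℝ^m → ℝ^m satisfy: (i) monotonicity, ⟨c(z) − c(v), z − v⟩ ≥ 0 for all z, v ∈ ℝ^m with nonnegative entries, and (ii) nonnegativity, c(z) has nonnegative entries whenever z has nonnegative entries. Then for all z, v ∈ ℝ^m with nonnegative entries, ⟨c(v) − c(z), z⟩ ≤ ⟨c(v), v⟩. -/
open Matrix

/-- Any monotone, nonnegative cost operator satisfies `β(c, v) ≤ 1`:
`⟨c(v) − c(z), z⟩ ≤ ⟨c(v), v⟩` for all nonnegative `z, v`. -/
theorem monotone_beta_le_one (m : ℕ) (c : (Fin m → ℝ) → (Fin m → ℝ))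
    (hmono : ∀ z v : Fin m → ℝ, (∀ i, 0 ≤ z i) → (∀ i, 0 ≤ v i) →
      0 ≤ (c z - c v) ⬝ᵥ (z - v))
    (hnn : ∀ z : Fin m → ℝ, (∀ i, 0 ≤ z i) → ∀ i, 0 ≤ c z i) :
    ∀ z v : Fin m → ℝ, (∀ i, 0 ≤ z i) → (∀ i, 0 ≤ v i) →
      (c v - c z) ⬝ᵥ z ≤ (c v) ⬝ᵥ v := by
  intro z v hz hv
  have h1 := hmono z v hz hv
  have h2 : 0 ≤ (c z) ⬝ᵥ v :=
    Finset.sum_nonneg fun i _ => mul_nonneg (hnn z hz i) (hv i)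
  simp only [sub_dotProduct, dotProduct_sub] at h1 ⊢
  linarith
end

section
/- Let n ∈ ℕ and k ≥ 1. Let A = Q + P ∈ ℝ^{2n×2n}, where Q is block diagonal with 2×2 blocks of the form [[k_i a_i, a_i], [k_i a_i, a_i]] or [[a_i, k_i a_i], [a_i, k_i a_i]] with a_i ≥ 0 and 1 ≤ k_i ≤ k, and P has nonnegative entries and is positive definite in the sense that ⟨P u, u⟩ ≥ 0 for all u ∈ ℝ^{2n}. Let b ∈ ℝ^{2n} have nonnegative entries. Then for all v, z ∈ ℝ^{2n} with nonnegative entries, ⟨(A v + b) − (A z + b), z⟩ ≤ (1 + k/4) ⟨A v + b, v⟩. -/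
open Matrix

lemma scalar_block (k κ aa v1 v2 z1 z2 : ℝ) (h1 : 1 ≤ κ) (h2 : κ ≤ k)
    (ha : 0 ≤ aa) (hv1 : 0 ≤ v1) (hv2 : 0 ≤ v2) (hz1 : 0 ≤ z1) (hz2 : 0 ≤ z2) :
    aa * ((κ * v1 + v2) * (z1 + z2)) - aa * ((κ * z1 + z2) * (z1 + z2)) ≤
      (1 + k / 4) * (aa * ((κ * v1 + v2) * (v1 + v2))) := by
  have hκ : 0 < κ := lt_of_lt_of_le one_pos h1
  have hu : 0 ≤ κ * v1 + v2 := by positivity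
  have key : (κ * v1 + v2) * (z1 + z2) - (κ * z1 + z2) * (z1 + z2) ≤
      (1 + k / 4) * ((κ * v1 + v2) * (v1 + v2)) := by
    nlinarith [sq_nonneg (κ * v1 + v2 - 2 * (z1 + z2)),
      mul_nonneg hu (sub_nonneg.2 (show κ * v1 + v2 ≤ κ * (v1 + v2) by nlinarith)),
      mul_nonneg (mul_nonneg hu hv1) (sub_nonneg.2 h2),
      mul_nonneg (mul_nonneg hu hv2) (sub_nonneg.2 h2),
      mul_nonneg hu (add_nonneg hv1 hv2), mul_nonneg hz1 (sub_nonneg.2 h1)]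
  nlinarith [mul_le_mul_of_nonneg_left key ha]

lemma qform (n : ℕ) (B : Fin n → Matrix (Fin 2) (Fin 2) ℝ) (x y : Fin 2 × Fin n → ℝ) :
    (Matrix.blockDiagonal B *ᵥ x) ⬝ᵥ y =
      ∑ i : Fin n, ((B i 0 0 * x (0, i) + B i 0 1 * x (1, i)) * y (0, i) +
        (B i 1 0 * x (0, i) + B i 1 1 * x (1, i)) * y (1, i)) := by
  simp [dotProduct, mulVec, Matrix.blockDiagonal_apply, Fintype.sum_prod_type,
    Fin.sum_univ_two, ite_mul, Finset.sum_ite_eq, Finset.sum_ite_eq']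
  rw [← Finset.sum_add_distrib]

/-- Core estimate `β(C) ≤ 1 + k/4` for nonseparable costs: if `A = Q + P` with
`Q` pairwise separable of maximum degree of asymmetry `k` and `P` positive
semidefinite with nonnegative entries, then for nonnegative `v, z`,
`⟨(A v + b) − (A z + b), z⟩ ≤ (1 + k/4)⟨A v + b, v⟩`. -/
theorem beta_bound_nonseparable (n : ℕ) (k : ℝ) (hk : 1 ≤ k)
    (a ki : Fin n → ℝ) (ha : ∀ i, 0 ≤ a i)
    (hki : ∀ i, 1 ≤ ki i ∧ ki i ≤ k)
    (B : Fin n → Matrix (Fin 2) (Fin 2) ℝ)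
    (hB : ∀ i, B i = !![ki i * a i, a i; ki i * a i, a i] ∨
               B i = !![a i, ki i * a i; a i, ki i * a i])
    (Q : Matrix (Fin 2 × Fin n) (Fin 2 × Fin n) ℝ)
    (hQ : Q = Matrix.blockDiagonal B)
    (P : Matrix (Fin 2 × Fin n) (Fin 2 × Fin n) ℝ)
    (hPnn : ∀ i j, 0 ≤ P i j)
    (hPpsd : ∀ u : Fin 2 × Fin n → ℝ, 0 ≤ (P *ᵥ u) ⬝ᵥ u)
    (A : Matrix (Fin 2 × Fin n) (Fin 2 × Fin n) ℝ) (hA : A = Q + P)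
    (b : Fin 2 × Fin n → ℝ) (hb : ∀ j, 0 ≤ b j)
    (v z : Fin 2 × Fin n → ℝ) (hv : ∀ j, 0 ≤ v j) (hz : ∀ j, 0 ≤ z j) :
    ((A *ᵥ v + b) - (A *ᵥ z + b)) ⬝ᵥ z ≤ (1 + k / 4) * ((A *ᵥ v + b) ⬝ᵥ v) := by
  subst hA hQ
  -- P part
  have hPvz : 0 ≤ (P *ᵥ z) ⬝ᵥ v := by
    simp only [Matrix.mulVec, dotProduct]
    exact Finset.sum_nonneg fun j _ =>
      mul_nonneg (Finset.sum_nonneg fun l _ => mul_nonneg (hPnn j l) (hz l)) (hv j)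
  have hPvv : 0 ≤ (P *ᵥ v) ⬝ᵥ v := hPpsd v
  have hPkey : (P *ᵥ v) ⬝ᵥ z - (P *ᵥ z) ⬝ᵥ z ≤ (P *ᵥ v) ⬝ᵥ v := by
    have h := hPpsd (v - z)
    rw [Matrix.mulVec_sub] at h
    simp only [sub_dotProduct, dotProduct_sub] at h
    linarith
  -- Q part
  have hQkey : (Matrix.blockDiagonal B *ᵥ v) ⬝ᵥ z - (Matrix.blockDiagonal B *ᵥ z) ⬝ᵥ z ≤
      (1 + k / 4) * ((Matrix.blockDiagonal B *ᵥ v) ⬝ᵥ v) := by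
    rw [qform, qform, qform, ← Finset.sum_sub_distrib, Finset.mul_sum]
    apply Finset.sum_le_sum
    intro i _
    obtain ⟨hki1, hki2⟩ := hki i
    rcases hB i with hBi | hBi <;> rw [hBi] <;> simp
    · have := scalar_block k (ki i) (a i) (v (0, i)) (v (1, i)) (z (0, i)) (z (1, i))
        hki1 hki2 (ha i) (hv _) (hv _) (hz _) (hz _)
      nlinarith [this]
    · have := scalar_block k (ki i) (a i) (v (1, i)) (v (0, i)) (z (1, i)) (z (0, i))
        hki1 hki2 (ha i) (hv _) (hv _) (hz _) (hz _)
      nlinarith [this]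
  -- combine
  have hbv : 0 ≤ b ⬝ᵥ v := Finset.sum_nonneg fun j _ => mul_nonneg (hb j) (hv j)
  have hLHS : ((Matrix.blockDiagonal B + P) *ᵥ v + b - ((Matrix.blockDiagonal B + P) *ᵥ z + b)) ⬝ᵥ z
      = (Matrix.blockDiagonal B *ᵥ v) ⬝ᵥ z + (P *ᵥ v) ⬝ᵥ z
        - ((Matrix.blockDiagonal B *ᵥ z) ⬝ᵥ z + (P *ᵥ z) ⬝ᵥ z) := by
    simp only [Matrix.add_mulVec, sub_dotProduct, add_dotProduct]
    ring
  have hRHS : ((Matrix.blockDiagonal B + P) *ᵥ v + b) ⬝ᵥ v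
      = (Matrix.blockDiagonal B *ᵥ v) ⬝ᵥ v + (P *ᵥ v) ⬝ᵥ v + b ⬝ᵥ v := by
    simp only [Matrix.add_mulVec, add_dotProduct]
  rw [hLHS, hRHS]
  nlinarith [hQkey, hPkey, hPvv, hbv, hPvz]
end

section
/- Let n ∈ ℕ and k ≥ 1. Let c(z) = A z + b where A = Q + P ∈ ℝ^{2n×2n}, Q is block diagonal with 2×2 blocks of the form [[k_i a_i, a_i], [k_i a_i, a_i]] or [[a_i, k_i a_i], [a_i, k_i a_i]] with a_i ≥ 0 and 1 ≤ k_i ≤ k, P has nonnegative entries and satisfies ⟨P u, u⟩ ≥ 0 for all u ∈ ℝ^{2n}, and b ∈ ℝ^{2n} has nonnegative entries. Let X be a set of vectors in ℝ^{2n} with nonnegative entries, let z^EQ ∈ X satisfy ⟨c(z^EQ), z^EQ − z⟩ ≤ 0 for all z ∈ X, and let w ∈ ℝ^{2n} have nonnegative entries with (2 + k/4)^{-1} w ∈ X. Then ⟨c(z^EQ), z^EQ⟩ ≤ ⟨c(w), w⟩. -/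
open Matrix

private lemma block_ineq (k κ x1 x2 w1 w2 : ℝ) (hκ1 : 1 ≤ κ) (hκk : κ ≤ k)
    (hx1 : 0 ≤ x1) (hx2 : 0 ≤ x2) (hw1 : 0 ≤ w1) (hw2 : 0 ≤ w2) :
    (κ*x1+x2)*(w1+w2) ≤ (κ*x1+x2)*(x1+x2) + (1+k/4)*((κ*w1+w2)*(w1+w2)) := by
  have hκ0 : (0:ℝ) < κ := lt_of_lt_of_le one_pos hκ1
  have hu0 : 0 ≤ κ*x1+x2 := by positivity
  have hW0 : 0 ≤ w1+w2 := by positivity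
  have h4 : 0 ≤ (κ*x1+x2) * (κ*(x1+x2) - (κ*x1+x2)) :=
    mul_nonneg hu0 (by nlinarith)
  have h3 : 0 ≤ (2*(κ*x1+x2) - κ*(w1+w2))^2 := sq_nonneg _
  have hVW : (w1+w2)*(w1+w2) ≤ (κ*w1+w2)*(w1+w2) := by
    nlinarith [mul_nonneg (mul_nonneg hw1 hW0) (sub_nonneg.2 hκ1)]
  have h6a : κ*((w1+w2)*(w1+w2))/4 ≤ (1+k/4)*((w1+w2)*(w1+w2)) := by
    nlinarith [mul_nonneg (by linarith : (0:ℝ) ≤ 4+k-κ) (mul_nonneg hW0 hW0)]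
  have h6 : κ*((w1+w2)*(w1+w2))/4 ≤ (1+k/4)*((κ*w1+w2)*(w1+w2)) :=
    h6a.trans (mul_le_mul_of_nonneg_left hVW (by linarith))
  have hmul : κ * ((κ*x1+x2)*(w1+w2) - (κ*x1+x2)*(x1+x2) - (1+k/4)*((κ*w1+w2)*(w1+w2))) ≤ 0 := by
    nlinarith [h3, h4, mul_le_mul_of_nonneg_left h6 hκ0.le]
  nlinarith [hmul, sub_nonneg.2 hκ1]

private lemma blockDiag_dot (n : ℕ) (B : Fin n → Matrix (Fin 2) (Fin 2) ℝ)
    (x w : Fin 2 × Fin n → ℝ) :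
    (Matrix.blockDiagonal B *ᵥ x) ⬝ᵥ w
      = ∑ i : Fin n, ((B i *ᵥ fun p => x (p, i)) ⬝ᵥ fun p => w (p, i)) := by
  simp only [mulVec, dotProduct, blockDiagonal_apply, Fintype.sum_prod_type]
  rw [Finset.sum_comm]
  refine Finset.sum_congr rfl fun i _ => ?_
  refine Finset.sum_congr rfl fun p _ => ?_
  congr 1
  rw [Finset.sum_comm]
  simp

/-- Theorem 3(b) (bicriteria, nonseparable costs): with `c(z) = (Q + P) z + b`,
`Q` pairwise separable of maximum degree of asymmetry `k`, `P` positive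
semidefinite with nonnegative entries and `b` nonnegative, the social cost of a
Wardrop equilibrium is at most that of any nonnegative `w` whose down-scaling
`(2 + k/4)⁻¹ w` is feasible. -/
theorem bicriteria_nonseparable (n : ℕ) (k : ℝ) (hk : 1 ≤ k)
    (a ki : Fin n → ℝ) (ha : ∀ i, 0 ≤ a i)
    (hki : ∀ i, 1 ≤ ki i ∧ ki i ≤ k)
    (B : Fin n → Matrix (Fin 2) (Fin 2) ℝ)
    (hB : ∀ i, B i = !![ki i * a i, a i; ki i * a i, a i] ∨
               B i = !![a i, ki i * a i; a i, ki i * a i])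
    (Q : Matrix (Fin 2 × Fin n) (Fin 2 × Fin n) ℝ)
    (hQ : Q = Matrix.blockDiagonal B)
    (P : Matrix (Fin 2 × Fin n) (Fin 2 × Fin n) ℝ)
    (hPnn : ∀ i j, 0 ≤ P i j)
    (hPpsd : ∀ u : Fin 2 × Fin n → ℝ, 0 ≤ (P *ᵥ u) ⬝ᵥ u)
    (A : Matrix (Fin 2 × Fin n) (Fin 2 × Fin n) ℝ) (hA : A = Q + P)
    (b : Fin 2 × Fin n → ℝ) (hb : ∀ j, 0 ≤ b j)
    (c : (Fin 2 × Fin n → ℝ) → (Fin 2 × Fin n → ℝ))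
    (hc : ∀ z, c z = A *ᵥ z + b)
    (X : Set (Fin 2 × Fin n → ℝ)) (hX : ∀ z ∈ X, ∀ j, 0 ≤ z j)
    (zeq : Fin 2 × Fin n → ℝ) (hzeq : zeq ∈ X)
    (hVI : ∀ z ∈ X, (c zeq) ⬝ᵥ (zeq - z) ≤ 0)
    (w : Fin 2 × Fin n → ℝ) (hw : ∀ j, 0 ≤ w j)
    (hwX : (2 + k / 4)⁻¹ • w ∈ X) :
    (c zeq) ⬝ᵥ zeq ≤ (c w) ⬝ᵥ w := by
  have hx : ∀ j, 0 ≤ zeq j := hX zeq hzeq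
  -- nonnegative dot products with b
  have hbx : 0 ≤ b ⬝ᵥ zeq := Finset.sum_nonneg fun j _ => mul_nonneg (hb j) (hx j)
  have hbw : 0 ≤ b ⬝ᵥ w := Finset.sum_nonneg fun j _ => mul_nonneg (hb j) (hw j)
  -- P part of the key inequality
  have hPwx : 0 ≤ (P *ᵥ w) ⬝ᵥ zeq := by
    simp only [mulVec, dotProduct]
    refine Finset.sum_nonneg fun j _ => mul_nonneg ?_ (hx j)
    exact Finset.sum_nonneg fun l _ => mul_nonneg (hPnn j l) (hw l)
  have hPww : 0 ≤ (P *ᵥ w) ⬝ᵥ w := hPpsd w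
  have hPkey : (P *ᵥ zeq) ⬝ᵥ w ≤ (P *ᵥ zeq) ⬝ᵥ zeq + (P *ᵥ w) ⬝ᵥ w := by
    have h := hPpsd (zeq - w)
    have hexp : (P *ᵥ (zeq - w)) ⬝ᵥ (zeq - w)
        = (P *ᵥ zeq) ⬝ᵥ zeq - (P *ᵥ zeq) ⬝ᵥ w - (P *ᵥ w) ⬝ᵥ zeq + (P *ᵥ w) ⬝ᵥ w := by
      rw [mulVec_sub]
      simp [dotProduct_sub, sub_dotProduct]
      ring
    rw [hexp] at h
    linarith
  -- Q part of the key inequality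
  have hQkey : (Q *ᵥ zeq) ⬝ᵥ w ≤ (Q *ᵥ zeq) ⬝ᵥ zeq + (1 + k/4) * ((Q *ᵥ w) ⬝ᵥ w) := by
    rw [hQ, blockDiag_dot, blockDiag_dot, blockDiag_dot, Finset.mul_sum,
      ← Finset.sum_add_distrib]
    refine Finset.sum_le_sum fun i _ => ?_
    obtain ⟨hki1, hkik⟩ := hki i
    rcases hB i with h | h <;> rw [h] <;>
      simp only [mulVec, dotProduct, Fin.sum_univ_two, Matrix.cons_val', Matrix.cons_val_zero,
        Matrix.cons_val_one, Matrix.head_cons, Matrix.empty_val', Matrix.cons_val_fin_one,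
        Matrix.head_fin_const, Matrix.of_apply, Matrix.cons_val'] 
    · have := block_ineq k (ki i) (zeq (0, i)) (zeq (1, i)) (w (0, i)) (w (1, i))
        hki1 hkik (hx _) (hx _) (hw _) (hw _)
      nlinarith [ha i, mul_le_mul_of_nonneg_left this (ha i)]
    · have := block_ineq k (ki i) (zeq (1, i)) (zeq (0, i)) (w (1, i)) (w (0, i))
        hki1 hkik (hx _) (hx _) (hw _) (hw _)
      nlinarith [ha i, mul_le_mul_of_nonneg_left this (ha i)]
  -- key inequality for A
  have hkey : (A *ᵥ zeq) ⬝ᵥ w ≤ (A *ᵥ zeq) ⬝ᵥ zeq + (1 + k/4) * ((A *ᵥ w) ⬝ᵥ w) := by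
    rw [hA]
    simp only [add_mulVec, add_dotProduct]
    nlinarith [hPww]
  -- variational inequality at (2+k/4)⁻¹ • w
  have hs0 : (0:ℝ) < 2 + k / 4 := by linarith
  have hVIw := hVI _ hwX
  have hVIw' : (c zeq) ⬝ᵥ zeq ≤ (2 + k/4)⁻¹ * ((c zeq) ⬝ᵥ w) := by
    have : (c zeq) ⬝ᵥ ((2 + k / 4)⁻¹ • w) = (2 + k/4)⁻¹ * ((c zeq) ⬝ᵥ w) := by
      simp [dotProduct_smul, smul_eq_mul]
    rw [dotProduct_sub, this] at hVIw
    linarith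
  simp only [hc, add_dotProduct] at hVIw' ⊢
  -- final arithmetic
  set E := (A *ᵥ zeq) ⬝ᵥ zeq + b ⬝ᵥ zeq with hE
  have h1 : E ≤ (2 + k/4)⁻¹ * ((A *ᵥ zeq) ⬝ᵥ w + b ⬝ᵥ w) := hVIw'
  have h2 : (A *ᵥ zeq) ⬝ᵥ w ≤ E + (1 + k/4) * ((A *ᵥ w) ⬝ᵥ w) := by
    rw [hE]; linarith [hkey, hbx]
  have h3 : E ≤ (2 + k/4)⁻¹ * (E + (1 + k/4) * ((A *ᵥ w) ⬝ᵥ w) + b ⬝ᵥ w) := by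
    refine h1.trans ?_
    apply mul_le_mul_of_nonneg_left _ (inv_nonneg.2 hs0.le)
    linarith
  have h4 : (2 + k/4) * E ≤ E + (1 + k/4) * ((A *ᵥ w) ⬝ᵥ w) + b ⬝ᵥ w := by
    have := mul_le_mul_of_nonneg_left h3 hs0.le
    rwa [mul_inv_cancel_left₀ hs0.ne'] at this
  have h5 : (1 + k/4) * E ≤ (1 + k/4) * ((A *ᵥ w) ⬝ᵥ w) + b ⬝ᵥ w := by linarith
  have hk4 : (0:ℝ) < 1 + k/4 := by linarith
  nlinarith [mul_le_mul_of_nonneg_left (le_refl ((A *ᵥ w) ⬝ᵥ w)) hk4.le, hbw, h5, hk4]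
end

section
/- Fix k ≥ 1. Consider the two-link network with feasible set X = {(x₁, y₁, x₂, y₂) ∈ ℝ⁴ : all entries ≥ 0, x₁ + x₂ = 1, y₁ + y₂ = 1}, per-unit link costs c₁(z) = k x₁ + y₁ and c₂(z) = x₂ + k y₂ (experienced equally by both vehicle types on each link), and social cost C(z) = (k x₁ + y₁)(x₁ + y₁) + (x₂ + k y₂)(x₂ + y₂). Then: (i) the flow z^EQ = (1, 0, 0, 1) satisfies the variational inequality ⟨c(z^EQ), z^EQ − z⟩ ≤ 0 for all z ∈ X, where c(z) = (c₁, c₁, c₂, c₂); (ii) C(z^EQ) = 2k; (iii) the minimum of C over X equals 2, attained at (0, 1, 1, 0). Consequently the ratio of equilibrium to optimal social cost of this instance equals k. -/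
/-!
At `(1, 0, 0, 1)` both links cost `k`, so the equilibrium cost vector is constant; since every
feasible flow routes the same total demand, the variational inequality holds with equality.
For the optimum, lowering `k` to `1` can only decrease the social cost, which then becomes
`L₁² + L₂²` in the link loads `Lᵢ = xᵢ + yᵢ`; as `L₁ + L₂ = 2`, this is at least `2`.
-/

open Matrix

theorem const_dotProduct_sub_eq_zero {n R : Type*} [Fintype n] [CommRing R] (a : R)
    {u v : n → R} (h : ∑ i, u i = ∑ i, v i) : (fun _ => a) ⬝ᵥ (u - v) = 0 := by
  simp only [dotProduct, Pi.sub_apply, ← Finset.mul_sum, Finset.sum_sub_distrib, h, sub_self,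
    mul_zero]

theorem two_le_sq_add_sq_of_add_eq_two {a b : ℝ} (h : a + b = 2) : 2 ≤ a ^ 2 + b ^ 2 := by
  nlinarith [sq_nonneg (a - b)]

def twoSidedSocialCost (k x₁ y₁ x₂ y₂ : ℝ) : ℝ :=
  (k * x₁ + y₁) * (x₁ + y₁) + (x₂ + k * y₂) * (x₂ + y₂)

theorem sq_add_sq_le_twoSidedSocialCost {k x₁ y₁ x₂ y₂ : ℝ} (hk : 1 ≤ k) (hx₁ : 0 ≤ x₁)
    (hy₁ : 0 ≤ y₁) (hx₂ : 0 ≤ x₂) (hy₂ : 0 ≤ y₂) :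
    (x₁ + y₁) ^ 2 + (x₂ + y₂) ^ 2 ≤ twoSidedSocialCost k x₁ y₁ x₂ y₂ := by
  have h₁ : 0 ≤ (k - 1) * x₁ * (x₁ + y₁) := by have := sub_nonneg.mpr hk; positivity
  have h₂ : 0 ≤ (k - 1) * y₂ * (x₂ + y₂) := by have := sub_nonneg.mpr hk; positivity
  unfold twoSidedSocialCost
  linarith

theorem two_le_twoSidedSocialCost {k x₁ y₁ x₂ y₂ : ℝ} (hk : 1 ≤ k) (hx₁ : 0 ≤ x₁)
    (hy₁ : 0 ≤ y₁) (hx₂ : 0 ≤ x₂) (hy₂ : 0 ≤ y₂) (hx : x₁ + x₂ = 1) (hy : y₁ + y₂ = 1) :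
    2 ≤ twoSidedSocialCost k x₁ y₁ x₂ y₂ :=
  (two_le_sq_add_sq_of_add_eq_two (by linarith)).trans
    (sq_add_sq_le_twoSidedSocialCost hk hx₁ hy₁ hx₂ hy₂)

/-- Example 2 (two-sided asymmetry): with unit demands of each type and link
costs `c₁ = k x₁ + y₁`, `c₂ = x₂ + k y₂`, the flow `(1, 0, 0, 1)` is a Wardrop
equilibrium of cost `2k`, the minimum social cost is `2` (attained at
`(0, 1, 1, 0)`), so the equilibrium-to-optimal ratio equals `k`. -/
theorem example_two_sided (k : ℝ) (hk : 1 ≤ k)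
    (X : Set (Fin 4 → ℝ))
    (hX : X = {z | (∀ i, 0 ≤ z i) ∧ z 0 + z 2 = 1 ∧ z 1 + z 3 = 1})
    (c : (Fin 4 → ℝ) → (Fin 4 → ℝ))
    (hc : ∀ z, c z = ![k * z 0 + z 1, k * z 0 + z 1, z 2 + k * z 3, z 2 + k * z 3])
    (C : (Fin 4 → ℝ) → ℝ)
    (hC : ∀ z, C z = (k * z 0 + z 1) * (z 0 + z 1) + (z 2 + k * z 3) * (z 2 + z 3))
    (zeq : Fin 4 → ℝ) (hzeq : zeq = ![1, 0, 0, 1]) :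
    (∀ z ∈ X, (c zeq) ⬝ᵥ (zeq - z) ≤ 0) ∧
    C zeq = 2 * k ∧
    IsLeast {v : ℝ | ∃ z ∈ X, v = C z} 2 ∧
    (![0, 1, 1, 0] : Fin 4 → ℝ) ∈ X ∧
    C ![0, 1, 1, 0] = 2 ∧
    C zeq / C ![0, 1, 1, 0] = k := by
  subst hX hzeq
  have hc_eq : c ![1, 0, 0, 1] = fun _ => k := by
    rw [hc]; ext i; fin_cases i <;> simp
  have hCeq : C ![1, 0, 0, 1] = 2 * k := by
    rw [hC]; simp only [cons_val_zero, cons_val_one, cons_val]; ring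
  have hCopt : C ![0, 1, 1, 0] = 2 := by
    rw [hC]; simp only [cons_val_zero, cons_val_one, cons_val]; ring
  have hopt_mem : (![0, 1, 1, 0] : Fin 4 → ℝ) ∈ {z : Fin 4 → ℝ | (∀ i, 0 ≤ z i) ∧
      z 0 + z 2 = 1 ∧ z 1 + z 3 = 1} := by
    refine ⟨fun i => ?_, by simp, by simp⟩
    fin_cases i <;> simp
  refine ⟨?_, hCeq, ⟨⟨_, hopt_mem, hCopt.symm⟩, ?_⟩, hopt_mem, hCopt, ?_⟩
  · rintro z ⟨-, hx, hy⟩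
    rw [hc_eq]
    refine (const_dotProduct_sub_eq_zero k ?_).le
    simp only [Fin.sum_univ_four, cons_val_zero, cons_val_one, cons_val]
    linarith
  · rintro v ⟨z, ⟨hz, hx, hy⟩, rfl⟩
    rw [hC]
    exact two_le_twoSidedSocialCost hk (hz 0) (hz 1) (hz 2) (hz 3) hx hy
  · rw [hCeq, hCopt, mul_div_cancel_left₀ k two_ne_zero]
end

section
/- Fix k ≥ 1 and p > 0. In the two-link network with per-unit link costs c₁(z) = k x₁ + y₁ and c₂(z) = x₂ + k y₂ and social cost C(z) = (k x₁ + y₁)(x₁ + y₁) + (x₂ + k y₂)(x₂ + y₂), the minimum of C over the feasible set X_p = {(x₁, y₁, x₂, y₂) ∈ ℝ⁴ : all entries ≥ 0, x₁ + x₂ = p, y₁ + y₂ = p} equals 2p², attained at (0, p, p, 0). In particular, for p = √k the minimum social cost of routing √k times as much traffic of each type equals 2k, the equilibrium social cost of the original instance with unit demands; hence the bicriteria of this instance equals √k, and for k = 4 the bicriteria bound 1 + k/4 = 2 is attained. -/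
/-- Example 2, bicriteria part: routing `p` units of each type on the
two-sided-asymmetry network has minimum social cost `2p²`, attained at
`(0, p, p, 0)`; for `p = √k` this equals the equilibrium cost `2k` of the unit
demand instance, so the bicriteria equals `√k`, and at `k = 4` the bound
`1 + k/4 = 2` is attained. -/
theorem example_two_sided_bicriteria (k p : ℝ) (hk : 1 ≤ k) (hp : 0 < p)
    (Xp : Set (Fin 4 → ℝ))
    (hXp : Xp = {z | (∀ i, 0 ≤ z i) ∧ z 0 + z 2 = p ∧ z 1 + z 3 = p})
    (C : (Fin 4 → ℝ) → ℝ)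
    (hC : ∀ z, C z = (k * z 0 + z 1) * (z 0 + z 1) + (z 2 + k * z 3) * (z 2 + z 3)) :
    IsLeast {v : ℝ | ∃ z ∈ Xp, v = C z} (2 * p ^ 2) ∧
    (![0, p, p, 0] : Fin 4 → ℝ) ∈ Xp ∧
    C ![0, p, p, 0] = 2 * p ^ 2 ∧
    (p = Real.sqrt k → 2 * p ^ 2 = 2 * k) ∧
    (k = 4 → Real.sqrt k = 1 + k / 4) := by
  have hmem : (![0, p, p, 0] : Fin 4 → ℝ) ∈ Xp := by
    rw [hXp]
    refine ⟨fun i => ?_, by simp, by simp⟩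
    fin_cases i <;> simp [hp.le]
  have hval : C ![0, p, p, 0] = 2 * p ^ 2 := by
    rw [hC]; simp; ring
  refine ⟨⟨⟨![0, p, p, 0], hmem, hval.symm⟩, ?_⟩, hmem, hval, ?_, ?_⟩
  · rintro v ⟨z, hz, rfl⟩
    rw [hXp] at hz
    obtain ⟨hnn, h02, h13⟩ := hz
    rw [hC]
    have ha := hnn 0
    have hb := hnn 1
    have hc := hnn 2
    have hd := hnn 3
    have hap : z 0 ≤ p := by linarith
    have hbp : z 1 ≤ p := by linarith
    have h2 : z 2 = p - z 0 := by linarith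
    have h3 : z 3 = p - z 1 := by linarith
    rw [h2, h3]
    set a := z 0
    set b := z 1
    rcases le_or_gt (a + b) p with h | h
    · nlinarith [mul_nonneg (sub_nonneg.2 h) (by nlinarith : 0 ≤ 2*k*p - (k+1)*(a+b)),
        mul_nonneg (mul_nonneg (by linarith : (0:ℝ) ≤ k - 1) hp.le) ha]
    · nlinarith [mul_nonneg (by linarith : (0:ℝ) ≤ a + b - p) (by nlinarith : 0 ≤ (k+1)*(a+b) - 2*p),
        mul_nonneg (mul_nonneg (by linarith : (0:ℝ) ≤ k - 1) hp.le) (by linarith : 0 ≤ p - b)]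
  · intro hpk
    rw [hpk, Real.sq_sqrt (by linarith : (0:ℝ) ≤ k)]
  · intro hk4
    rw [hk4, show (4:ℝ) = 2^2 by norm_num, Real.sqrt_sq (by norm_num : (0:ℝ) ≤ 2)]
    norm_num
end

section
/- Fix 1 ≤ k ≤ 4 and set r = (2√k − 1)/(2k). Consider the two-link network with feasible set X = {(x₁, y₁, x₂, y₂) ∈ ℝ⁴ : all entries ≥ 0, x₁ + x₂ = r, y₁ + y₂ = 1/2}, per-unit link costs c₁ = 1 and c₂(z) = √k·x₂ + (1/√k)·y₂ (experienced equally by both vehicle types), and social cost C(z) = (x₁ + y₁)·1 + (√k·x₂ + (1/√k)·y₂)(x₂ + y₂). Then: (i) the flow z^EQ = (0, 0, r, 1/2) satisfies the variational inequality ⟨c(z^EQ), z^EQ − z⟩ ≤ 0 for all z ∈ X, and indeed c₂(z^EQ) = 1 = c₁; (ii) C(z^EQ) = (k + 2√k − 1)/(2k); (iii) the minimum of C over X equals (5√k − 2)/(4k), attained at (r, 0, 0, 1/2). Consequently the ratio of equilibrium to optimal social cost equals (2k + 4√k − 2)/(5√k − 2), which equals 4/3 when k = 1. -/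
/-!
Write `s = √k`, so `k = s²` and `r = (2s − 1)/(2s²)`. The equilibrium works because
`s·r + (1/s)·(1/2) = 1`: both links cost `1` at `z^EQ`, so `⟨c(z^EQ), z^EQ − z⟩` is the difference
of total demands, which is `0` on `X`.

For the optimum, let `x = x₂` and `u = y₁`. Then `s·(C(z) − (5s − 2)/(4s²))` equals
`x(s − 1)²/2 + u(s − 1) + (s²x − u)(x − u)`. For `s ≥ 1`, `x ≥ 0` and `0 ≤ u ≤ 1/2` this is
nonnegative. The last term is negative only when `x < u < s²x`, and in that case the whole
expression equals `(s²x − u)(1/2 + x − u) + (2s − 1)(u − x)/2 ≥ 0`.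
-/

open Matrix

section OneSidedAsymmetry

variable {s : ℝ}

theorem link_two_cost_eq_one (hs : s ≠ 0) :
    s * ((2 * s - 1) / (2 * s ^ 2)) + 1 / s * (1 / 2) = 1 := by
  field_simp
  ring

theorem social_cost_gap_nonneg (hs : 1 ≤ s) {x u : ℝ} (hx : 0 ≤ x) (hu : 0 ≤ u)
    (hu' : u ≤ 1 / 2) :
    0 ≤ x * (s - 1) ^ 2 / 2 + u * (s - 1) + (s ^ 2 * x - u) * (x - u) := by
  have hx_le : x ≤ s ^ 2 * x := le_mul_of_one_le_left hx (by nlinarith)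
  rcases le_total (s ^ 2 * x) u with h₁ | h₁
  · nlinarith [mul_nonneg (sub_nonneg.2 h₁) (sub_nonneg.2 (hx_le.trans h₁)), sq_nonneg (s - 1)]
  rcases le_total u x with h₂ | h₂
  · nlinarith [mul_nonneg (sub_nonneg.2 h₁) (sub_nonneg.2 h₂), sq_nonneg (s - 1)]
  · nlinarith [mul_nonneg (sub_nonneg.2 h₁) (by linarith : (0:ℝ) ≤ 1 / 2 + x - u)]

theorem optimal_le_social_cost (hs : 1 ≤ s) {x₁ y₁ x₂ y₂ : ℝ} (hx₂ : 0 ≤ x₂) (hy₁ : 0 ≤ y₁)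
    (hy₂ : 0 ≤ y₂) (hx : x₁ + x₂ = (2 * s - 1) / (2 * s ^ 2)) (hy : y₁ + y₂ = 1 / 2) :
    (5 * s - 2) / (4 * s ^ 2) ≤ (x₁ + y₁) * 1 + (s * x₂ + 1 / s * y₂) * (x₂ + y₂) := by
  have hs0 : 0 < s := by linarith
  have gap : (x₁ + y₁) * 1 + (s * x₂ + 1 / s * y₂) * (x₂ + y₂) - (5 * s - 2) / (4 * s ^ 2) =
      (x₂ * (s - 1) ^ 2 / 2 + y₁ * (s - 1) + (s ^ 2 * x₂ - y₁) * (x₂ - y₁)) / s := by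
    obtain rfl : x₁ = (2 * s - 1) / (2 * s ^ 2) - x₂ := by linarith
    obtain rfl : y₂ = 1 / 2 - y₁ := by linarith
    field_simp
    ring
  have := div_nonneg (social_cost_gap_nonneg hs hx₂ hy₁ (by linarith)) hs0.le
  linarith

end OneSidedAsymmetry

theorem example_one_sided_general (k r : ℝ) (hk1 : 1 ≤ k)
    (hr : r = (2 * Real.sqrt k - 1) / (2 * k))
    (X : Set (Fin 4 → ℝ))
    (hX : X = {z | (∀ i, 0 ≤ z i) ∧ z 0 + z 2 = r ∧ z 1 + z 3 = 1 / 2})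
    (c : (Fin 4 → ℝ) → (Fin 4 → ℝ))
    (hc : ∀ z, c z = ![1, 1, Real.sqrt k * z 2 + (1 / Real.sqrt k) * z 3,
      Real.sqrt k * z 2 + (1 / Real.sqrt k) * z 3])
    (C : (Fin 4 → ℝ) → ℝ)
    (hC : ∀ z, C z = (z 0 + z 1) * 1 +
      (Real.sqrt k * z 2 + (1 / Real.sqrt k) * z 3) * (z 2 + z 3))
    (zeq : Fin 4 → ℝ) (hzeq : zeq = ![0, 0, r, 1 / 2]) :
    (∀ z ∈ X, (c zeq) ⬝ᵥ (zeq - z) ≤ 0) ∧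
    Real.sqrt k * zeq 2 + (1 / Real.sqrt k) * zeq 3 = 1 ∧
    C zeq = (k + 2 * Real.sqrt k - 1) / (2 * k) ∧
    IsLeast {v : ℝ | ∃ z ∈ X, v = C z} ((5 * Real.sqrt k - 2) / (4 * k)) ∧
    (![r, 0, 0, 1 / 2] : Fin 4 → ℝ) ∈ X ∧
    C ![r, 0, 0, 1 / 2] = (5 * Real.sqrt k - 2) / (4 * k) ∧
    C zeq / ((5 * Real.sqrt k - 2) / (4 * k))
      = (2 * k + 4 * Real.sqrt k - 2) / (5 * Real.sqrt k - 2) ∧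
    (k = 1 → (2 * k + 4 * Real.sqrt k - 2) / (5 * Real.sqrt k - 2) = 4 / 3) := by
  obtain ⟨s, hs, rfl⟩ : ∃ s, 1 ≤ s ∧ k = s ^ 2 :=
    ⟨√k, Real.one_le_sqrt.2 hk1, (Real.sq_sqrt (by linarith)).symm⟩
  have hs0 : 0 < s := by linarith
  rw [Real.sqrt_sq hs0.le] at hr hc hC ⊢
  subst hr hX hzeq
  set r := (2 * s - 1) / (2 * s ^ 2) with hr
  have hcost : s * r + 1 / s * (1 / 2) = 1 := link_two_cost_eq_one hs0.ne'
  have hCeq : C ![0, 0, r, 1 / 2] = (s ^ 2 + 2 * s - 1) / (2 * s ^ 2) := by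
    simp only [hC, Matrix.cons_val, hr]
    field_simp
    ring
  have hCopt : C ![r, 0, 0, 1 / 2] = (5 * s - 2) / (4 * s ^ 2) := by
    simp only [hC, Matrix.cons_val, hr]
    field_simp
    ring
  have hopt : ![r, 0, 0, 1 / 2] ∈
      {z : Fin 4 → ℝ | (∀ i, 0 ≤ z i) ∧ z 0 + z 2 = r ∧ z 1 + z 3 = 1 / 2} := by
    refine ⟨fun i => ?_, by simp, by simp⟩
    have : 0 ≤ r := div_nonneg (by linarith) (by positivity)
    fin_cases i <;> simp [this]
  refine ⟨fun z ⟨_, hx, hy⟩ => ?_, by simpa only [Matrix.cons_val] using hcost, hCeq,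
    ⟨⟨_, hopt, hCopt.symm⟩, ?_⟩, hopt, hCopt, ?_, fun h => ?_⟩
  · simp only [hc, Matrix.cons_val, hcost, dotProduct, Fin.sum_univ_four, Pi.sub_apply]
    linarith
  · rintro _ ⟨z, ⟨hz, hx, hy⟩, rfl⟩
    rw [hC]
    exact optimal_le_social_cost hs (hz 2) (hz 1) (hz 3) hx hy
  · rw [hCeq]
    field_simp
    ring
  · obtain rfl : s = 1 := (pow_eq_one_iff_of_nonneg hs0.le two_ne_zero).1 h
    norm_num

/-- Example 3 (one-sided asymmetry): with `r = (2√k − 1)/(2k)` units of regular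
and `1/2` units of smart traffic, link costs `c₁ = 1` and
`c₂ = √k x₂ + (1/√k) y₂`, the all-on-bottom flow is a Wardrop equilibrium with
`c₂ = 1` and cost `(k + 2√k − 1)/(2k)`, the minimum social cost is
`(5√k − 2)/(4k)` (attained at `(r, 0, 0, 1/2)`), and the ratio equals
`(2k + 4√k − 2)/(5√k − 2)`, which is `4/3` at `k = 1`. -/
theorem example_one_sided (k r : ℝ) (hk1 : 1 ≤ k) (hk4 : k ≤ 4)
    (hr : r = (2 * Real.sqrt k - 1) / (2 * k))
    (X : Set (Fin 4 → ℝ))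
    (hX : X = {z | (∀ i, 0 ≤ z i) ∧ z 0 + z 2 = r ∧ z 1 + z 3 = 1 / 2})
    (c : (Fin 4 → ℝ) → (Fin 4 → ℝ))
    (hc : ∀ z, c z = ![1, 1, Real.sqrt k * z 2 + (1 / Real.sqrt k) * z 3,
      Real.sqrt k * z 2 + (1 / Real.sqrt k) * z 3])
    (C : (Fin 4 → ℝ) → ℝ)
    (hC : ∀ z, C z = (z 0 + z 1) * 1 +
      (Real.sqrt k * z 2 + (1 / Real.sqrt k) * z 3) * (z 2 + z 3))
    (zeq : Fin 4 → ℝ) (hzeq : zeq = ![0, 0, r, 1 / 2]) :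
    (∀ z ∈ X, (c zeq) ⬝ᵥ (zeq - z) ≤ 0) ∧
    Real.sqrt k * zeq 2 + (1 / Real.sqrt k) * zeq 3 = 1 ∧
    C zeq = (k + 2 * Real.sqrt k - 1) / (2 * k) ∧
    IsLeast {v : ℝ | ∃ z ∈ X, v = C z} ((5 * Real.sqrt k - 2) / (4 * k)) ∧
    (![r, 0, 0, 1 / 2] : Fin 4 → ℝ) ∈ X ∧
    C ![r, 0, 0, 1 / 2] = (5 * Real.sqrt k - 2) / (4 * k) ∧
    C zeq / ((5 * Real.sqrt k - 2) / (4 * k))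
      = (2 * k + 4 * Real.sqrt k - 2) / (5 * Real.sqrt k - 2) ∧
    (k = 1 → (2 * k + 4 * Real.sqrt k - 2) / (5 * Real.sqrt k - 2) = 4 / 3) :=
  example_one_sided_general k r hk1 hr X hX c hc C hC zeq hzeq
end
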